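/- Let C : ℤ^d × ℤ^d → [0,∞) satisfy (A1) and (A2). Then there exists c > 0, depending only on κ₁, d and α, such that for every ρ ≥ 1, every λ ≥ 1, every unit vector v ∈ ℝ^d, every sign σ ∈ {+1,−1} and every ξ ∈ ρ^{-1}ℤ^d: Σ_{ζ ∈ ρ^{-1}ℤ^d, 0<|ξ−ζ|≤λ} (exp(σ⟨v, ζ−ξ⟩) − 1)² C^ρ(ξ,ζ) ρ^{−d} ≤ c·λ^{4−α}·e^{2λ}. -/

import Mathlib

/-!
Since `t ≤ exp t - 1 ≤ t * exp t`, a summand with `|ξ - ζ| = n` is at most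
`κ₁ e^{2λ} ρ^{α-2} n^{2-α-d}`, so after substituting `z = ξ - ζ` the sum is bounded by
`κ₁ e^{2λ} ρ^{α-2}` times the truncated Riesz sum `∑_{0 < |z| ≤ ρλ} |z|^{(2-α)-d}`.
The sup-norm shell `{‖z‖_∞ = k + 1}` of `ℤ^d` has `O(k^{d-1})` points, all with `|z| ≍ k + 1`,
so the Riesz sum is `O(∑_{k < ρλ} (k + 1)^{1-α}) = O((ρλ)^{2-α})`. The powers of `ρ` cancel,
leaving `O(λ^{2-α} e^{2λ})`.
-/

open scoped ENNReal

/-- Euclidean norm of a point of `ℤ^d`. -/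
noncomputable def zNorm (d : ℕ) (v : Fin d → ℤ) : ℝ := Real.sqrt (∑ i, ((v i : ℝ))^2)

/-- The point of the scaled lattice `ρ⁻¹ℤ^d` with integer coordinates `z`. -/
noncomputable def latt (d : ℕ) (ρ : ℝ) (z : Fin d → ℤ) : EuclideanSpace ℝ (Fin d) :=
  WithLp.toLp 2 (fun i => (z i : ℝ) / ρ)

open Finset Real

lemma abs_exp_sub_one_le_mul_exp {t b : ℝ} (ht : |t| ≤ b) : |exp t - 1| ≤ b * exp b := by
  have hlow := add_one_le_exp t
  have hup : exp t - 1 ≤ t * exp t := by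
    have := mul_le_mul_of_nonneg_right (one_sub_le_exp_neg t) (exp_pos t).le
    rw [← exp_add, neg_add_cancel, exp_zero] at this
    linarith
  have hb : 0 ≤ b := (abs_nonneg t).trans ht
  have hexp : exp t ≤ exp b := exp_le_exp.2 (le_of_abs_le ht)
  rw [abs_le] at ht ⊢
  constructor <;> nlinarith [exp_pos t, one_le_exp hb]

lemma sq_exp_sub_one_le_sq_mul_exp {t b : ℝ} (ht : |t| ≤ b) :
    (exp t - 1) ^ 2 ≤ b ^ 2 * exp (2 * b) := by
  have hb : 0 ≤ b := (abs_nonneg t).trans ht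
  calc (exp t - 1) ^ 2 = |exp t - 1| ^ 2 := (sq_abs _).symm
    _ ≤ (b * exp b) ^ 2 := by gcongr; exact abs_exp_sub_one_le_mul_exp ht
    _ = b ^ 2 * exp (2 * b) := by rw [mul_pow, ← exp_nat_mul]; norm_num

lemma mul_add_one_rpow_le_rpow_sub_rpow {β : ℝ} (hβ₀ : 0 ≤ β) (hβ₁ : β ≤ 1) {x : ℝ}
    (hx : 0 ≤ x) : β * (x + 1) ^ (β - 1) ≤ (x + 1) ^ β - x ^ β := by
  have hm : 0 < x + 1 := by linarith
  have hbern : (x / (x + 1)) ^ β ≤ 1 + β * -(x + 1)⁻¹ := by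
    convert rpow_one_add_le_one_add_mul_self (s := -(x + 1)⁻¹)
      (by rw [neg_le_neg_iff]; exact inv_le_one_of_one_le₀ (by linarith)) hβ₀ hβ₁ using 2
    field_simp; ring
  rw [div_rpow hx hm.le, div_le_iff₀ (rpow_pos_of_pos hm β)] at hbern
  have : (1 + β * -(x + 1)⁻¹) * (x + 1) ^ β = (x + 1) ^ β - β * ((x + 1) ^ β / (x + 1)) := by
    ring
  rw [rpow_sub_one hm.ne']
  linarith

lemma sum_range_add_one_rpow_le {β : ℝ} (hβ : 0 < β) (N : ℕ) :
    ∑ k ∈ range N, ((k : ℝ) + 1) ^ (β - 1) ≤ max 1 β⁻¹ * (N : ℝ) ^ β := by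
  rcases le_total 1 β with h | h
  · calc ∑ k ∈ range N, ((k : ℝ) + 1) ^ (β - 1) ≤ ∑ _k ∈ range N, (N : ℝ) ^ (β - 1) := by
          gcongr with k hk
          exact_mod_cast mem_range.1 hk
      _ = (N : ℝ) ^ β := by
          rw [sum_const, card_range, nsmul_eq_mul,
            ← rpow_one_add' (Nat.cast_nonneg N) (by linarith), add_sub_cancel]
      _ ≤ max 1 β⁻¹ * (N : ℝ) ^ β := le_mul_of_one_le_left (by positivity) (le_max_left _ _)
  · calc ∑ k ∈ range N, ((k : ℝ) + 1) ^ (β - 1)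
          ≤ ∑ k ∈ range N, β⁻¹ * ((((k + 1 : ℕ) : ℝ)) ^ β - (k : ℝ) ^ β) := by
          gcongr with k
          rw [le_inv_mul_iff₀ hβ]; push_cast
          exact mul_add_one_rpow_le_rpow_sub_rpow hβ.le h (Nat.cast_nonneg k)
      _ = β⁻¹ * (N : ℝ) ^ β := by
          rw [← mul_sum, sum_range_sub (fun k : ℕ => (k : ℝ) ^ β)]
          simp [zero_rpow hβ.ne']
      _ ≤ max 1 β⁻¹ * (N : ℝ) ^ β := by gcongr; exact le_max_right _ _

lemma zNorm_sub_comm (d : ℕ) (x y : Fin d → ℤ) : zNorm d (x - y) = zNorm d (y - x) := by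
  simp only [zNorm, Pi.sub_apply, Int.cast_sub]
  congr 1
  exact sum_congr rfl fun i _ => by ring

lemma zNorm_nonneg {d : ℕ} (z : Fin d → ℤ) : 0 ≤ zNorm d z := sqrt_nonneg _

lemma zNorm_zero (d : ℕ) : zNorm d 0 = 0 := by simp [zNorm]

lemma abs_le_zNorm {d : ℕ} (z : Fin d → ℤ) (i : Fin d) : |(z i : ℝ)| ≤ zNorm d z := by
  rw [← sqrt_sq_eq_abs]
  exact sqrt_le_sqrt (single_le_sum (f := fun j => ((z j : ℝ)) ^ 2)
    (fun j _ => sq_nonneg _) (mem_univ i))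

lemma zNorm_le_sqrt_mul {d : ℕ} {z : Fin d → ℤ} {m : ℝ} (hm : 0 ≤ m)
    (h : ∀ i, |(z i : ℝ)| ≤ m) : zNorm d z ≤ √d * m := by
  have : zNorm d z ≤ √(∑ _i : Fin d, m ^ 2) :=
    sqrt_le_sqrt (sum_le_sum fun i _ => sq_le_sq' (abs_le.1 (h i)).1 (abs_le.1 (h i)).2)
  simpa [sqrt_mul (Nat.cast_nonneg d), sqrt_sq hm] using this

lemma norm_latt_sub (d : ℕ) {ρ : ℝ} (hρ : 0 < ρ) (ζ ξ : Fin d → ℤ) :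
    ‖latt d ρ ζ - latt d ρ ξ‖ = zNorm d (ζ - ξ) / ρ := by
  have hcoord (i : Fin d) :
      ‖(latt d ρ ζ - latt d ρ ξ) i‖ ^ 2 = ((ζ - ξ) i : ℝ) ^ 2 / ρ ^ 2 := by
    simp [latt, ← sub_div, div_pow]
  rw [EuclideanSpace.norm_eq, zNorm, sum_congr rfl fun i _ => hcoord i, ← sum_div,
    sqrt_div' _ (sq_nonneg ρ), sqrt_sq hρ.le]

noncomputable def cube (d n : ℕ) : Finset (Fin d → ℤ) :=
  Fintype.piFinset fun _ => Icc (-n : ℤ) n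

lemma mem_cube {d n : ℕ} {z : Fin d → ℤ} : z ∈ cube d n ↔ ∀ i, |z i| ≤ n := by
  simp [cube, abs_le]

lemma cube_mono (d : ℕ) : Monotone (cube d) := fun _ _ h _ hz =>
  mem_cube.2 fun i => (mem_cube.1 hz i).trans (by exact_mod_cast h)

lemma cube_zero (d : ℕ) : cube d 0 = {0} := by
  ext z; simp [mem_cube, funext_iff]

lemma card_cube (d n : ℕ) : #(cube d n) = (2 * n + 1) ^ d := by
  simp only [cube, Fintype.card_piFinset, Int.card_Icc, prod_const, card_univ, Fintype.card_fin]
  congr 1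
  omega

lemma card_cube_succ_sdiff_le (d k : ℕ) :
    #(cube d (k + 1) \ cube d k) ≤ 2 * d * (2 * k + 3) ^ (d - 1) := by
  rw [card_sdiff_of_subset (cube_mono d k.le_succ), card_cube, card_cube]
  have := abs_pow_sub_pow_le (α := ℤ) (2 * k + 3) (2 * k + 1) d
  have hle : (2 * k + 1) ^ d ≤ (2 * (k + 1) + 1) ^ d := Nat.pow_le_pow_left (by omega) d
  zify [hle]
  rw [max_eq_left (by rw [abs_of_nonneg (by positivity), abs_of_nonneg (by positivity)]; linarith),
    abs_of_nonneg (by positivity : (0:ℤ) ≤ 2 * k + 3)] at this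
  norm_num at this
  exact (le_abs_self _).trans (by ring_nf at this ⊢; exact this)

lemma zNorm_mem_Icc_of_mem_cube_sdiff {d k : ℕ} {z : Fin d → ℤ}
    (hz : z ∈ cube d (k + 1) \ cube d k) :
    zNorm d z ∈ Set.Icc ((k : ℝ) + 1) (√d * (k + 1)) := by
  obtain ⟨hin, hout⟩ := mem_sdiff.1 hz
  obtain ⟨i, hi⟩ := not_forall.1 (mt mem_cube.2 hout)
  refine ⟨?_, zNorm_le_sqrt_mul (by positivity) fun j => ?_⟩
  · refine le_trans ?_ (abs_le_zNorm z i)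
    rw [← Int.cast_abs]; exact_mod_cast (not_le.1 hi)
  · rw [← Int.cast_abs]; exact_mod_cast mem_cube.1 hin j

lemma zNorm_rpow_le_of_mem_cube_sdiff {d k : ℕ} {z : Fin d → ℤ}
    (hz : z ∈ cube d (k + 1) \ cube d k) (γ : ℝ) :
    zNorm d z ^ γ ≤ max 1 (√d ^ γ) * ((k : ℝ) + 1) ^ γ := by
  obtain ⟨hlow, hup⟩ := zNorm_mem_Icc_of_mem_cube_sdiff hz
  rcases le_total 0 γ with hγ | hγ
  · calc zNorm d z ^ γ ≤ (√d * (k + 1)) ^ γ := rpow_le_rpow (zNorm_nonneg z) hup hγ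
      _ = √d ^ γ * ((k : ℝ) + 1) ^ γ := mul_rpow (by positivity) (by positivity)
      _ ≤ max 1 (√d ^ γ) * ((k : ℝ) + 1) ^ γ := by gcongr; exact le_max_right _ _
  · calc zNorm d z ^ γ ≤ ((k : ℝ) + 1) ^ γ := rpow_le_rpow_of_nonpos (by positivity) hlow hγ
      _ ≤ max 1 (√d ^ γ) * ((k : ℝ) + 1) ^ γ :=
        le_mul_of_one_le_left (by positivity) (le_max_left _ _)

lemma sum_cube_sdiff_zNorm_rpow_le (d k : ℕ) (β : ℝ) :
    ∑ z ∈ cube d (k + 1) \ cube d k, zNorm d z ^ (β - d)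
      ≤ 2 * 3 ^ (d - 1) * max 1 (√d ^ (β - d)) * (d * ((k : ℝ) + 1) ^ (β - 1)) := by
  have hcard : (#(cube d (k + 1) \ cube d k) : ℝ) ≤ 2 * d * (3 * ((k : ℝ) + 1)) ^ (d - 1) := by
    calc (#(cube d (k + 1) \ cube d k) : ℝ) ≤ (2 * d * (2 * k + 3) ^ (d - 1) : ℕ) := by
          exact_mod_cast card_cube_succ_sdiff_le d k
      _ ≤ 2 * d * (3 * ((k : ℝ) + 1)) ^ (d - 1) := by push_cast; gcongr; linarith
  have hpow : (d : ℝ) * ((k : ℝ) + 1) ^ (d - 1) * ((k : ℝ) + 1) ^ (β - d)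
      = d * ((k : ℝ) + 1) ^ (β - 1) := by
    -- for `d = 0` both sides vanish; otherwise the natural subtraction `d - 1` does not truncate
    rcases Nat.eq_zero_or_pos d with rfl | hd
    · simp
    rw [mul_assoc, ← rpow_natCast, ← rpow_add (by positivity), Nat.cast_sub hd]
    ring_nf
  calc ∑ z ∈ cube d (k + 1) \ cube d k, zNorm d z ^ (β - d)
      ≤ #(cube d (k + 1) \ cube d k) * (max 1 (√d ^ (β - d)) * ((k : ℝ) + 1) ^ (β - d)) := by
        rw [← nsmul_eq_mul]
        exact sum_le_card_nsmul _ _ _ fun z hz => zNorm_rpow_le_of_mem_cube_sdiff hz _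
    _ ≤ 2 * d * (3 * ((k : ℝ) + 1)) ^ (d - 1) *
          (max 1 (√d ^ (β - d)) * ((k : ℝ) + 1) ^ (β - d)) := by gcongr
    _ = 2 * 3 ^ (d - 1) * max 1 (√d ^ (β - d)) *
          (d * ((k : ℝ) + 1) ^ (d - 1) * ((k : ℝ) + 1) ^ (β - d)) := by rw [mul_pow]; ring
    _ = 2 * 3 ^ (d - 1) * max 1 (√d ^ (β - d)) * (d * ((k : ℝ) + 1) ^ (β - 1)) := by rw [hpow]

lemma sum_range_sum_cube_sdiff_zNorm_rpow_le (d N : ℕ) {β : ℝ} (hβ : 0 < β) :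
    ∑ k ∈ range N, ∑ z ∈ cube d (k + 1) \ cube d k, zNorm d z ^ (β - d)
      ≤ 2 * 3 ^ (d - 1) * max 1 (√d ^ (β - d)) * (d * (max 1 β⁻¹ * (N : ℝ) ^ β)) := by
  calc ∑ k ∈ range N, ∑ z ∈ cube d (k + 1) \ cube d k, zNorm d z ^ (β - d)
      ≤ ∑ k ∈ range N, 2 * 3 ^ (d - 1) * max 1 (√d ^ (β - d)) * (d * ((k : ℝ) + 1) ^ (β - 1)) :=
        sum_le_sum fun k _ => sum_cube_sdiff_zNorm_rpow_le d k β
    _ ≤ 2 * 3 ^ (d - 1) * max 1 (√d ^ (β - d)) * (d * (max 1 β⁻¹ * (N : ℝ) ^ β)) := by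
        rw [← mul_sum, ← mul_sum]
        gcongr
        exact sum_range_add_one_rpow_le hβ N

noncomputable def truncatedRieszKernel (d : ℕ) (β R : ℝ) (z : Fin d → ℤ) : ℝ≥0∞ :=
  if 0 < zNorm d z ∧ zNorm d z ≤ R then ENNReal.ofReal (zNorm d z ^ (β - d)) else 0

theorem tsum_truncatedRieszKernel_le (d : ℕ) {β : ℝ} (hβ : 0 < β) :
    ∃ c > (0 : ℝ), ∀ R : ℝ, 1 ≤ R →
      ∑' z, truncatedRieszKernel d β R z ≤ ENNReal.ofReal (c * R ^ β) := by
  set A := 2 * 3 ^ (d - 1) * max 1 (√d ^ (β - d)) * (d * (max 1 β⁻¹ * 2 ^ β))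
  refine ⟨max A 1, by positivity, fun R hR => ?_⟩
  set N := ⌈R⌉₊
  have hsupp (z : Fin d → ℤ) (hz : z ∉ cube d N) : truncatedRieszKernel d β R z = 0 := by
    refine if_neg fun ⟨_, hzR⟩ => hz (mem_cube.2 fun i => ?_)
    have := ((abs_le_zNorm z i).trans hzR).trans (Nat.le_ceil R)
    exact_mod_cast this
  have hN : (N : ℝ) ^ β ≤ 2 ^ β * R ^ β := by
    rw [← mul_rpow zero_le_two (by linarith)]
    gcongr
    linarith [Nat.ceil_lt_add_one (zero_le_one.trans hR)]
  have hterm_nonneg (z : Fin d → ℤ) : 0 ≤ zNorm d z ^ (β - d) := rpow_nonneg (zNorm_nonneg z) _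
  rw [tsum_eq_sum hsupp, sum_eq_sum_range_sdiff (cube d) (cube_mono d), cube_zero,
    sum_singleton, truncatedRieszKernel, zNorm_zero, if_neg (fun h => lt_irrefl _ h.1), zero_add]
  calc ∑ k ∈ range N, ∑ z ∈ cube d (k + 1) \ cube d k, truncatedRieszKernel d β R z
      ≤ ∑ k ∈ range N, ∑ z ∈ cube d (k + 1) \ cube d k, ENNReal.ofReal (zNorm d z ^ (β - d)) := by
        gcongr; unfold truncatedRieszKernel; split_ifs <;> simp
    _ = ENNReal.ofReal (∑ k ∈ range N, ∑ z ∈ cube d (k + 1) \ cube d k, zNorm d z ^ (β - d)) := by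
        rw [ENNReal.ofReal_sum_of_nonneg fun _ _ => sum_nonneg fun z _ => hterm_nonneg z]
        exact sum_congr rfl fun k _ =>
          (ENNReal.ofReal_sum_of_nonneg fun z _ => hterm_nonneg z).symm
    _ ≤ ENNReal.ofReal (A * R ^ β) := by
        refine ENNReal.ofReal_le_ofReal ((sum_range_sum_cube_sdiff_zNorm_rpow_le d N hβ).trans ?_)
        calc _ ≤ 2 * 3 ^ (d - 1) * max 1 (√d ^ (β - d)) * (d * (max 1 β⁻¹ * (2 ^ β * R ^ β))) := by
              gcongr
          _ = A * R ^ β := by ring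
    _ ≤ ENNReal.ofReal (max A 1 * R ^ β) := by gcongr; exact le_max_left _ _

lemma sq_exp_sub_one_mul_le {t n ρ lam κ C s α : ℝ} (hρ : 0 < ρ) (hn : 0 < n)
    (ht : |t| ≤ n / ρ) (hnlam : n / ρ ≤ lam) (hC₀ : 0 ≤ C) (hC : C ≤ κ * n ^ (-(s + α))) :
    (exp t - 1) ^ 2 * (ρ ^ (s + α) * C) * ρ ^ (-s)
      ≤ κ * exp (2 * lam) * ρ ^ (α - 2) * n ^ ((2 - α) - s) := by
  have hn_pow : n ^ ((2 - α) - s) = n ^ 2 * n ^ (-(s + α)) := by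
    rw [← rpow_natCast, ← rpow_add hn]; ring_nf
  have hρ_pow : ρ ^ (α - 2) * ρ ^ 2 = ρ ^ (s + α) * ρ ^ (-s) := by
    rw [← rpow_natCast, ← rpow_add hρ, ← rpow_add hρ]; ring_nf
  calc (exp t - 1) ^ 2 * (ρ ^ (s + α) * C) * ρ ^ (-s)
      ≤ ((n / ρ) ^ 2 * exp (2 * lam)) * (ρ ^ (s + α) * (κ * n ^ (-(s + α)))) * ρ ^ (-s) := by
        gcongr
        exact (sq_exp_sub_one_le_sq_mul_exp ht).trans (by gcongr)
    _ = κ * exp (2 * lam) * (ρ ^ (α - 2) * ρ ^ 2) / ρ ^ 2 * (n ^ 2 * n ^ (-(s + α))) := by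
        rw [hρ_pow]; field_simp
    _ = κ * exp (2 * lam) * ρ ^ (α - 2) * n ^ ((2 - α) - s) := by
        rw [hn_pow]; field_simp

lemma abs_mul_inner_latt_sub_le {d : ℕ} {ρ σ : ℝ} (hρ : 0 < ρ) {v : EuclideanSpace ℝ (Fin d)}
    (hv : ‖v‖ ≤ 1) (hσ : |σ| ≤ 1) (ξ ζ : Fin d → ℤ) :
    |σ * inner ℝ v (latt d ρ ζ - latt d ρ ξ)| ≤ zNorm d (ξ - ζ) / ρ := by
  rw [zNorm_sub_comm, ← norm_latt_sub d hρ, abs_mul]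
  calc |σ| * |inner ℝ v (latt d ρ ζ - latt d ρ ξ)| ≤ 1 * (‖v‖ * ‖latt d ρ ζ - latt d ρ ξ‖) := by
        gcongr; exact abs_real_inner_le_norm _ _
    _ ≤ ‖latt d ρ ζ - latt d ρ ξ‖ := by
        rw [one_mul]; exact mul_le_of_le_one_left (norm_nonneg _) hv

lemma scaled_summand_le {d : ℕ} {ρ lam κ α σ C : ℝ} {v : EuclideanSpace ℝ (Fin d)}
    {ξ ζ : Fin d → ℤ} (hρ : 0 < ρ) (hv : ‖v‖ ≤ 1) (hσ : |σ| ≤ 1) (hC₀ : 0 ≤ C)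
    (hC : ξ ≠ ζ → C ≤ κ * zNorm d (ξ - ζ) ^ (-((d : ℝ) + α))) :
    (if 0 < zNorm d (ξ - ζ) / ρ ∧ zNorm d (ξ - ζ) / ρ ≤ lam then
        ENNReal.ofReal ((exp (σ * inner ℝ v (latt d ρ ζ - latt d ρ ξ)) - 1) ^ 2 *
          (ρ ^ ((d : ℝ) + α) * C) * ρ ^ (-(d : ℝ)))
      else 0)
      ≤ ENNReal.ofReal (κ * exp (2 * lam) * ρ ^ (α - 2)) *
          truncatedRieszKernel d (2 - α) (ρ * lam) (ξ - ζ) := by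
  split_ifs with h
  · obtain ⟨hpos, hle⟩ := h
    have hn : 0 < zNorm d (ξ - ζ) := (div_pos_iff_of_pos_right hρ).1 hpos
    have hξζ : ξ ≠ ζ := fun h => by simp [h, zNorm_zero] at hn
    rw [truncatedRieszKernel, if_pos ⟨hn, by rwa [div_le_iff₀' hρ] at hle⟩,
      ← ENNReal.ofReal_mul' (rpow_nonneg hn.le _)]
    exact ENNReal.ofReal_le_ofReal (sq_exp_sub_one_mul_le hρ hn
      (abs_mul_inner_latt_sub_le hρ hv hσ ξ ζ) hle hC₀ (hC hξζ))
  · exact zero_le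

theorem stmt7_general (d : ℕ) (α : ℝ) (hα : α ∈ Set.Ioo (0:ℝ) 2)
    (κ₁ : ℝ) (hκ₁ : 0 < κ₁) :
    -- c depends only on κ₁, d and α
    ∃ c > (0:ℝ),
      ∀ (C : (Fin d → ℤ) → (Fin d → ℤ) → ℝ),
        (∀ x y, 0 ≤ C x y) →
        -- (A1)
        (∀ x y, C x y = C y x) → (∀ x, C x x = 0) →
        -- (A2)
        (∀ x y, x ≠ y → C x y ≤ κ₁ * zNorm d (x - y) ^ (-((d:ℝ) + α))) →
        ∀ (ρ : ℝ), 1 ≤ ρ → ∀ (lam : ℝ), 1 ≤ lam →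
        ∀ (v : EuclideanSpace ℝ (Fin d)), ‖v‖ = 1 →
        ∀ (σ : ℝ), (σ = 1 ∨ σ = -1) →
        ∀ ξ : Fin d → ℤ,
          (∑' ζ : Fin d → ℤ,
              if 0 < zNorm d (ξ - ζ) / ρ ∧ zNorm d (ξ - ζ) / ρ ≤ lam then
                ENNReal.ofReal
                  ((Real.exp (σ * (inner ℝ v (latt d ρ ζ - latt d ρ ξ) : ℝ)) - 1) ^ 2 *
                    (ρ ^ ((d:ℝ) + α) * C ξ ζ) * ρ ^ (-(d:ℝ)))
              else 0) ≤
            ENNReal.ofReal (c * lam ^ ((4:ℝ) - α) * Real.exp (2 * lam)) := by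
  obtain ⟨c, hc, hsum⟩ := tsum_truncatedRieszKernel_le d (sub_pos.2 hα.2)
  refine ⟨κ₁ * c, by positivity, fun C hC₀ _ _ hC ρ hρ lam hlam v hv σ hσ ξ => ?_⟩
  have hρ₀ : 0 < ρ := by linarith
  have hσ₁ : |σ| ≤ 1 := by rcases hσ with rfl | rfl <;> simp
  calc _ ≤ ∑' ζ, ENNReal.ofReal (κ₁ * exp (2 * lam) * ρ ^ (α - 2)) *
          truncatedRieszKernel d (2 - α) (ρ * lam) (ξ - ζ) :=
        ENNReal.tsum_le_tsum fun ζ => scaled_summand_le hρ₀ hv.le hσ₁ (hC₀ ξ ζ) (hC ξ ζ)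
    _ = ENNReal.ofReal (κ₁ * exp (2 * lam) * ρ ^ (α - 2)) *
          ∑' y, truncatedRieszKernel d (2 - α) (ρ * lam) y := by
        rw [ENNReal.tsum_mul_left]
        exact congrArg _ ((Equiv.subLeft ξ).tsum_eq _)
    _ ≤ ENNReal.ofReal (κ₁ * exp (2 * lam) * ρ ^ (α - 2)) *
          ENNReal.ofReal (c * (ρ * lam) ^ (2 - α)) := by
        gcongr; exact hsum _ (one_le_mul_of_one_le_of_one_le hρ hlam)
    _ = ENNReal.ofReal (κ₁ * c * lam ^ (2 - α) * exp (2 * lam)) := by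
        have hρ_pow : ρ ^ (α - 2) * ρ ^ (2 - α) = 1 := by rw [← rpow_add hρ₀]; simp
        rw [← ENNReal.ofReal_mul (by positivity), mul_rpow hρ₀.le (by linarith)]
        congr 1
        linear_combination (κ₁ * c * lam ^ (2 - α) * exp (2 * lam)) * hρ_pow
    _ ≤ ENNReal.ofReal (κ₁ * c * lam ^ ((4 : ℝ) - α) * exp (2 * lam)) := by
        gcongr
        norm_num

theorem stmt7 (d : ℕ) (hd : 1 ≤ d) (α : ℝ) (hα : α ∈ Set.Ioo (0:ℝ) 2)
    (κ₁ : ℝ) (hκ₁ : 0 < κ₁) :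
    -- c depends only on κ₁, d and α
    ∃ c > (0:ℝ),
      ∀ (C : (Fin d → ℤ) → (Fin d → ℤ) → ℝ),
        (∀ x y, 0 ≤ C x y) →
        -- (A1)
        (∀ x y, C x y = C y x) → (∀ x, C x x = 0) →
        -- (A2)
        (∀ x y, x ≠ y → C x y ≤ κ₁ * zNorm d (x - y) ^ (-((d:ℝ) + α))) →
        ∀ (ρ : ℝ), 1 ≤ ρ → ∀ (lam : ℝ), 1 ≤ lam →
        ∀ (v : EuclideanSpace ℝ (Fin d)), ‖v‖ = 1 →
        ∀ (σ : ℝ), (σ = 1 ∨ σ = -1) →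
        ∀ ξ : Fin d → ℤ,
          (∑' ζ : Fin d → ℤ,
              if 0 < zNorm d (ξ - ζ) / ρ ∧ zNorm d (ξ - ζ) / ρ ≤ lam then
                ENNReal.ofReal
                  ((Real.exp (σ * (inner ℝ v (latt d ρ ζ - latt d ρ ξ) : ℝ)) - 1) ^ 2 *
                    (ρ ^ ((d:ℝ) + α) * C ξ ζ) * ρ ^ (-(d:ℝ)))
              else 0) ≤
            ENNReal.ofReal (c * lam ^ ((4:ℝ) - α) * Real.exp (2 * lam)) :=
  stmt7_general d α hα κ₁ hκ₁
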